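/- arXiv:2604.19911 — 7 statements merged into one kernel-verified Lean document; each statement's English description precedes it below -/
import Mathlib

section
/- In the variant of 3-bit PMRAC, for every shared two-qubit density matrix ρ, every family of 2×2 unitary matrices (U_x)_{x∈{0,1}³}, and every triple of dichotomic observables B₁, B₂, B₃ on ℂ⁴, the average success probability satisfies S_Q ≤ 1/2 + 1/√6. -/
open Matrix
open scoped Kronecker ComplexOrder

noncomputable section

/-!
Let `ρ_x` be the state Bob receives and `G_y = ∑_x (-1)^{x_y} ρ_x`. As every `ρ_x` has trace one,
`S_Q = 1/2 + (1/48) ∑_y Tr (G_y B_y)`. The four odd Walsh characters of `{0,1}³` (the three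
coordinates and the parity) satisfy `∑_S χ_S(x) χ_S(x') = 4 [x' = x] - 4 [x' = x̄]`, because the
even characters do not separate `x` from its complement `x̄`. Hence
`∑_y Tr G_y² ≤ 4 ∑_x Tr ρ_x² ≤ 32`, the dropped terms being traces of products of positive
matrices. Finally `2t Tr (G_y B_y) ≤ t² Tr G_y² + Tr B_y²` with `Tr B_y² = 4`, and `t = √6/4`
gives `∑_y Tr (G_y B_y) ≤ 8√6`.
-/

namespace Matrix

variable {n 𝕜 : Type*} [Fintype n] [RCLike 𝕜]

theorem trace_mul_mul_conjTranspose_of_mem_unitary {R : Type*} [CommSemiring R] [StarRing R]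
    [DecidableEq n] {A : Matrix n n R} (hA : A ∈ unitary (Matrix n n R)) (M : Matrix n n R) :
    (A * M * Aᴴ).trace = M.trace := by
  rw [trace_mul_cycle, ← star_eq_conjTranspose, Unitary.star_mul_self_of_mem hA, one_mul]

theorem PosSemidef.trace_mul_nonneg {A B : Matrix n n 𝕜} (hA : A.PosSemidef)
    (hB : B.PosSemidef) : 0 ≤ (A * B).trace := by
  classical
  open scoped MatrixOrder in
  obtain ⟨C, rfl⟩ := CStarAlgebra.nonneg_iff_eq_star_mul_self.mp hB.nonneg
  rw [← mul_assoc, trace_mul_cycle, star_eq_conjTranspose]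
  exact (hA.mul_mul_conjTranspose_same C).trace_nonneg

theorem PosSemidef.trace_mul_self_le_sq_trace [DecidableEq n] {M : Matrix n n 𝕜}
    (hM : M.PosSemidef) : (M * M).trace ≤ M.trace ^ 2 := by
  have hsq : M * M = hM.1.eigenvectorUnitary *
      diagonal (fun i => ((hM.1.eigenvalues i ^ 2 : ℝ) : 𝕜)) *
      (hM.1.eigenvectorUnitary : Matrix n n 𝕜)ᴴ := by
    conv_lhs => rw [hM.1.spectral_theorem, ← map_mul, diagonal_mul_diagonal]
    simp [sq, star_eq_conjTranspose]
  rw [hsq, trace_mul_mul_conjTranspose_of_mem_unitary (SetLike.coe_mem _), trace_diagonal,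
    hM.1.trace_eq_sum_eigenvalues]
  exact_mod_cast Finset.sum_sq_le_sq_sum_of_nonneg fun i _ => hM.eigenvalues_nonneg i

theorem IsHermitian.two_mul_trace_mul_le {G B : Matrix n n 𝕜} (hG : G.IsHermitian)
    (hB : B.IsHermitian) (t : ℝ) :
    2 * t * (G * B).trace ≤ t ^ 2 * (G * G).trace + (B * B).trace := by
  have hH : ((t : 𝕜) • G - B).IsHermitian := (hG.smul (RCLike.conj_ofReal t)).sub hB
  have h0 := (posSemidef_self_mul_conjTranspose ((t : 𝕜) • G - B)).trace_nonneg
  rw [hH.eq] at h0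
  rw [← sub_nonneg]
  convert h0 using 1
  simp only [sub_mul, mul_sub, smul_mul_assoc, mul_smul_comm, trace_sub,
    trace_smul, smul_eq_mul, trace_mul_comm B G]
  ring

theorem sum_trace_mul_le_of_sum_trace_sq_le {ι : Type*} [Fintype ι] [DecidableEq n]
    {G B : ι → Matrix n n 𝕜} (hG : ∀ i, (G i).IsHermitian) (hB : ∀ i, (B i).IsHermitian)
    (hB2 : ∀ i, B i * B i = 1) {a : ℝ} (ha : ∑ i, (G i * G i).trace ≤ a) {t : ℝ}
    (ht : 0 < t) :
    ∑ i, (G i * B i).trace ≤ ((t * a + Fintype.card ι * Fintype.card n / t) / 2 : ℝ) := by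
  have h := Finset.sum_le_sum fun i (_ : i ∈ Finset.univ) => (hG i).two_mul_trace_mul_le (hB i) t
  simp only [← Finset.mul_sum, Finset.sum_add_distrib, hB2, trace_one, Finset.sum_const,
    Finset.card_univ, nsmul_eq_mul] at h
  have hsq : (0 : 𝕜) ≤ (t : 𝕜) ^ 2 := by exact_mod_cast sq_nonneg t
  have hinv : (0 : 𝕜) ≤ ((2 * t)⁻¹ : ℝ) := by exact_mod_cast (inv_pos.mpr (by positivity)).le
  have ht0 : (t : 𝕜) ≠ 0 := by exact_mod_cast ht.ne'
  calc ∑ i, (G i * B i).trace = ((2 * t)⁻¹ : ℝ) * (2 * t * ∑ i, (G i * B i).trace) := by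
        push_cast
        field_simp
    _ ≤ ((2 * t)⁻¹ : ℝ) * (t ^ 2 * a + Fintype.card ι * Fintype.card n) :=
        mul_le_mul_of_nonneg_left (h.trans (add_le_add_left (mul_le_mul_of_nonneg_left ha hsq) _))
          hinv
    _ = _ := by push_cast; field_simp

end Matrix

section Walsh

variable {n R : Type*} [CommRing R]

def walshCoeff {k : ℕ} (P : (Fin k → Fin 2) → Matrix n n R) (S : Finset (Fin k)) :
    Matrix n n R :=
  ∑ x, (-1 : R) ^ (∑ i ∈ S, (x i).val) • P x

theorem isHermitian_walshCoeff {𝕜 : Type*} [RCLike 𝕜] {k : ℕ}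
    {P : (Fin k → Fin 2) → Matrix n n 𝕜} (hP : ∀ x, (P x).IsHermitian) (S : Finset (Fin k)) :
    (walshCoeff P S).IsHermitian :=
  isSelfAdjoint_sum _ fun x _ => (hP x).smul ((IsSelfAdjoint.one 𝕜).neg.pow _)

variable [Fintype n]

theorem trace_walshCoeff_mul_walshCoeff {k : ℕ} (P : (Fin k → Fin 2) → Matrix n n R)
    (S T : Finset (Fin k)) :
    (walshCoeff P S * walshCoeff P T).trace = ∑ x, ∑ x',
      (-1 : R) ^ (∑ i ∈ S, (x i).val) * (-1) ^ (∑ i ∈ T, (x' i).val) * (P x * P x').trace := by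
  simp only [walshCoeff, Finset.sum_mul_sum, trace_sum, smul_mul_smul_comm, trace_smul,
    smul_eq_mul]

theorem walsh_orthogonality (x x' : Fin 3 → Fin 2) :
    ∑ y, (-1 : ℤ) ^ (x y).val * (-1) ^ (x' y).val +
        (-1) ^ (∑ i, (x i).val) * (-1) ^ (∑ i, (x' i).val) +
        (if x' = Fin.rev ∘ x then 4 else 0) =
      if x' = x then 4 else 0 := by
  revert x x'; decide

theorem sum_trace_walshCoeff_sq_add (P : (Fin 3 → Fin 2) → Matrix n n R) :
    ∑ y, (walshCoeff P {y} * walshCoeff P {y}).trace +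
        (walshCoeff P Finset.univ * walshCoeff P Finset.univ).trace +
        4 * ∑ x, (P x * P (Fin.rev ∘ x)).trace =
      4 * ∑ x, (P x * P x).trace := by
  have orth := fun x x' => congrArg (Int.cast : ℤ → R) (walsh_orthogonality x x')
  push_cast [apply_ite (Int.cast : ℤ → R)] at orth
  obtain ⟨antipodal, onDiagonal⟩ :
      4 * ∑ x, (P x * P (Fin.rev ∘ x)).trace =
        ∑ x, ∑ x', (if x' = Fin.rev ∘ x then (4 : R) else 0) * (P x * P x').trace ∧
      4 * ∑ x, (P x * P x).trace =
        ∑ x, ∑ x', (if x' = x then (4 : R) else 0) * (P x * P x').trace := by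
    constructor <;>
      simp only [ite_mul, zero_mul, Finset.sum_ite_eq', Finset.mem_univ, if_true, Finset.mul_sum]
  rw [antipodal, onDiagonal]
  simp only [trace_walshCoeff_mul_walshCoeff, Finset.sum_singleton]
  rw [Finset.sum_comm, ← Finset.sum_add_distrib, ← Finset.sum_add_distrib]
  refine Finset.sum_congr rfl fun x _ => ?_
  rw [Finset.sum_comm, ← Finset.sum_add_distrib, ← Finset.sum_add_distrib]
  refine Finset.sum_congr rfl fun x' _ => ?_
  rw [← orth x x', add_mul, add_mul, Finset.sum_mul]

theorem sum_trace_walshCoeff_sq_le {𝕜 : Type*} [RCLike 𝕜] {P : (Fin 3 → Fin 2) → Matrix n n 𝕜}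
    (hP : ∀ x, (P x).PosSemidef) :
    ∑ y, (walshCoeff P {y} * walshCoeff P {y}).trace ≤ 4 * ∑ x, (P x * P x).trace := by
  rw [← sum_trace_walshCoeff_sq_add, add_assoc]
  refine le_add_of_nonneg_right (add_nonneg ?_ ?_)
  · have hW := isHermitian_walshCoeff (fun x => (hP x).1) Finset.univ
    simpa only [hW.eq] using
      (posSemidef_self_mul_conjTranspose (walshCoeff P Finset.univ)).trace_nonneg
  · exact mul_nonneg zero_le_four
      (Finset.sum_nonneg fun x _ => (hP x).trace_mul_nonneg (hP _))

theorem successProbability_eq_walshCoeff [DecidableEq n] {K : Type*} [Field K] [CharZero K]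
    {P : (Fin 3 → Fin 2) → Matrix n n K} (hP : ∀ x, (P x).trace = 1)
    (B : Fin 3 → Matrix n n K) :
    (24 : K)⁻¹ * ∑ y, ∑ x, (P x * ((2 : K)⁻¹ • (1 + (-1 : K) ^ (x y).val • B y))).trace =
      2⁻¹ + 48⁻¹ * ∑ y, (walshCoeff P {y} * B y).trace := by
  have term (y : Fin 3) (x : Fin 3 → Fin 2) :
      (P x * ((2 : K)⁻¹ • (1 + (-1 : K) ^ (x y).val • B y))).trace =
        2⁻¹ + 2⁻¹ * ((-1) ^ (x y).val * (P x * B y).trace) := by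
    simp only [mul_smul_comm, mul_add, mul_one, trace_smul, trace_add, hP, smul_eq_mul]
  have bias (y : Fin 3) :
      (walshCoeff P {y} * B y).trace = ∑ x, (-1) ^ (x y).val * (P x * B y).trace := by
    simp only [walshCoeff, Finset.sum_singleton, Finset.sum_mul, trace_sum, smul_mul_assoc,
      trace_smul, smul_eq_mul]
  simp only [term, bias, Finset.sum_add_distrib, ← Finset.mul_sum, Finset.sum_const,
    Finset.card_univ, Fintype.card_fun, Fintype.card_fin, nsmul_eq_mul]
  ring

end Walsh

/-- In the variant of 3-bit PMRAC, for every shared two-qubit density matrix ρ,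
every family of 2×2 unitaries `U x` (x ∈ {0,1}³), and every triple of dichotomic
observables `B y` on ℂ⁴, the average success probability satisfies
`S_Q ≤ 1/2 + 1/√6`. -/
theorem optimal_bound_3bit_PMRAC
    (ρ : Matrix (Fin 2 × Fin 2) (Fin 2 × Fin 2) ℂ)
    (hρ : ρ.PosSemidef) (hρtr : ρ.trace = 1)
    (U : (Fin 3 → Fin 2) → Matrix (Fin 2) (Fin 2) ℂ)
    (hU : ∀ x, U x ∈ Matrix.unitaryGroup (Fin 2) ℂ)
    (B : Fin 3 → Matrix (Fin 2 × Fin 2) (Fin 2 × Fin 2) ℂ)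
    (hB : ∀ y, (B y).IsHermitian)
    (hB2 : ∀ y, B y * B y = 1) :
    ((24 : ℂ))⁻¹ * ∑ y : Fin 3, ∑ x : Fin 3 → Fin 2,
      (((U x ⊗ₖ (1 : Matrix (Fin 2) (Fin 2) ℂ)) * ρ *
          (U x ⊗ₖ (1 : Matrix (Fin 2) (Fin 2) ℂ))ᴴ) *
        ((2 : ℂ)⁻¹ • (1 + ((-1 : ℂ) ^ (x y).val) • B y))).trace
      ≤ ((1 / 2 + 1 / Real.sqrt 6 : ℝ) : ℂ) := by
  set P : (Fin 3 → Fin 2) → Matrix (Fin 2 × Fin 2) (Fin 2 × Fin 2) ℂ := fun x =>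
    (U x ⊗ₖ (1 : Matrix (Fin 2) (Fin 2) ℂ)) * ρ * (U x ⊗ₖ (1 : Matrix (Fin 2) (Fin 2) ℂ))ᴴ
  have hP x : (P x).PosSemidef := hρ.mul_mul_conjTranspose_same _
  have hPtr x : (P x).trace = 1 :=
    (trace_mul_mul_conjTranspose_of_mem_unitary (kronecker_mem_unitary (hU x) (one_mem _)) ρ).trans
      hρtr
  have hsumsq : ∑ y, (walshCoeff P {y} * walshCoeff P {y}).trace ≤ ((32 : ℝ) : ℂ) :=
    calc _ ≤ 4 * ∑ x, (P x * P x).trace := sum_trace_walshCoeff_sq_le hP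
      _ ≤ 4 * ∑ _x : Fin 3 → Fin 2, 1 := by
        gcongr with x
        simpa [hPtr] using (hP x).trace_mul_self_le_sq_trace
      _ = ((32 : ℝ) : ℂ) := by simp; norm_num
  have hbias := sum_trace_mul_le_of_sum_trace_sq_le
    (fun y => isHermitian_walshCoeff (fun x => (hP x).1) {y}) hB hB2 hsumsq
    (t := Real.sqrt 6 / 4) (by positivity)
  have hsqrt : (2⁻¹ + 48⁻¹ * ((Real.sqrt 6 / 4 * 32 + 3 * 4 / (Real.sqrt 6 / 4)) / 2) : ℝ) =
      1 / 2 + 1 / Real.sqrt 6 := by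
    have h6 : Real.sqrt 6 ^ 2 = 6 := Real.sq_sqrt (by norm_num)
    field_simp
    linear_combination 32 * h6
  refine (successProbability_eq_walshCoeff hPtr B).trans_le ?_
  calc _ ≤ 2⁻¹ + 48⁻¹ * (((Real.sqrt 6 / 4 * 32 + 3 * 4 / (Real.sqrt 6 / 4)) / 2 : ℝ) : ℂ) := by
        gcongr
        simpa using hbias
    _ = _ := by rw [← hsqrt]; push_cast; ring
end
end

section
/- Let (ρ_x)_{x∈{0,1}³} be eight 4×4 density matrices such that ρ₀₀₀ + ρ₀₁₁ + ρ₁₀₁ + ρ₁₁₀ = I₄ and ρ₀₀₁ + ρ₀₁₀ + ρ₁₀₀ + ρ₁₁₁ = I₄. Then Tr[M₁N₁] + Tr[M₂N₂] + Tr[M₃N₃] = −4 + 4(Tr[ρ₀₀₀ρ₁₁₁] + Tr[ρ₀₁₁ρ₁₀₀] + Tr[ρ₁₀₁ρ₀₁₀] + Tr[ρ₁₁₀ρ₀₀₁]). -/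
open Matrix
open scoped ComplexOrder

noncomputable section

abbrev Mat4 := Matrix (Fin 4) (Fin 4) ℂ

def Mop (ρ : (Fin 3 → Fin 2) → Mat4) : Fin 3 → Mat4 :=
  ![-ρ ![0, 0, 0] - ρ ![0, 1, 1] + ρ ![1, 0, 1] + ρ ![1, 1, 0],
    -ρ ![0, 0, 0] + ρ ![0, 1, 1] - ρ ![1, 0, 1] + ρ ![1, 1, 0],
    -ρ ![0, 0, 0] + ρ ![0, 1, 1] + ρ ![1, 0, 1] - ρ ![1, 1, 0]]

def Nop (ρ : (Fin 3 → Fin 2) → Mat4) : Fin 3 → Mat4 :=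
  ![ρ ![0, 0, 1] + ρ ![0, 1, 0] - ρ ![1, 0, 0] - ρ ![1, 1, 1],
    ρ ![0, 0, 1] - ρ ![0, 1, 0] + ρ ![1, 0, 0] - ρ ![1, 1, 1],
    -ρ ![0, 0, 1] + ρ ![0, 1, 0] + ρ ![1, 0, 0] - ρ ![1, 1, 1]]

/-- For eight density matrices with each parity class summing to I₄,
`Tr[M₁N₁] + Tr[M₂N₂] + Tr[M₃N₃]
  = −4 + 4(Tr[ρ₀₀₀ρ₁₁₁] + Tr[ρ₀₁₁ρ₁₀₀] + Tr[ρ₁₀₁ρ₀₁₀] + Tr[ρ₁₁₀ρ₀₀₁])`. -/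
theorem trace_MN_sum
    (ρ : (Fin 3 → Fin 2) → Mat4)
    (hρ : ∀ x, (ρ x).PosSemidef)
    (hρtr : ∀ x, (ρ x).trace = 1)
    (hsum0 : ρ ![0, 0, 0] + ρ ![0, 1, 1] + ρ ![1, 0, 1] + ρ ![1, 1, 0] = 1)
    (hsum1 : ρ ![0, 0, 1] + ρ ![0, 1, 0] + ρ ![1, 0, 0] + ρ ![1, 1, 1] = 1) :
    (Mop ρ 0 * Nop ρ 0).trace + (Mop ρ 1 * Nop ρ 1).trace + (Mop ρ 2 * Nop ρ 2).trace
      = -4 + 4 * ((ρ ![0, 0, 0] * ρ ![1, 1, 1]).trace + (ρ ![0, 1, 1] * ρ ![1, 0, 0]).trace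
          + (ρ ![1, 0, 1] * ρ ![0, 1, 0]).trace + (ρ ![1, 1, 0] * ρ ![0, 0, 1]).trace) := by
  have hd : ρ ![1, 1, 0] = 1 - ρ ![0, 0, 0] - ρ ![0, 1, 1] - ρ ![1, 0, 1] := by
    rw [← hsum0]; abel
  have hh : ρ ![1, 1, 1] = 1 - ρ ![0, 0, 1] - ρ ![0, 1, 0] - ρ ![1, 0, 0] := by
    rw [← hsum1]; abel
  simp only [Mop, Nop, Matrix.cons_val_zero, Matrix.cons_val_one, Matrix.head_cons,
    Matrix.cons_val_two, Matrix.tail_cons, hd, hh]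
  simp only [Matrix.mul_add, Matrix.add_mul, Matrix.mul_sub, Matrix.sub_mul,
    Matrix.neg_mul, Matrix.mul_neg, Matrix.mul_one, Matrix.one_mul,
    Matrix.trace_add, Matrix.trace_sub, Matrix.trace_neg, Matrix.trace_one,
    hρtr]
  norm_num
  ring
end
end

section
/- Let (ρ_x)_{x∈{0,1}³} be eight 4×4 density matrices such that each of the quadruples {ρ₀₀₀, ρ₀₁₁, ρ₁₀₁, ρ₁₁₀} and {ρ₀₀₁, ρ₀₁₀, ρ₁₀₀, ρ₁₁₁} consists of pairwise orthogonal rank-one orthogonal projections summing to I₄. Then for all dichotomic observables B₁, B₂, B₃ on ℂ⁴, the correlation function Δ = Σ_{y=1}^{3} Tr[(N_y − M_y) B_y] satisfies Δ ≤ 8√6. -/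
/-!
Each `M_y` and `N_y` is a signed sum of four orthogonal projections summing to `I`, hence a
Hermitian involution, so `Tr (N_y - M_y)² = 8 - 2 Tr (M_y N_y)`. Expanding the products,
`∑_y M_y N_y = 4 ∑ ρ_x ρ_{x̄} - I` where `x̄` is the bitwise complement of `x`, and the trace of
a projection times a positive matrix is nonnegative, so `∑_y Tr (N_y - M_y)² ≤ 32`.
Cauchy–Schwarz for the Hilbert–Schmidt inner product, with `Tr B_y² = 4`, then bounds the
correlation by `√(32 · 12) = 8√6`.
-/

open Matrix
open scoped ComplexOrder

noncomputable section

/-- parity of x₁+x₂+x₃ (addition in Fin 2 is mod 2). -/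
def par (x : Fin 3 → Fin 2) : Fin 2 := x 0 + x 1 + x 2

namespace Matrix

variable {n : Type*} [Fintype n]

lemma IsHermitian.im_trace_mul_eq_zero {X Y : Matrix n n ℂ} (hX : X.IsHermitian)
    (hY : Y.IsHermitian) : (X * Y).trace.im = 0 := by
  refine Complex.conj_eq_iff_im.mp ?_
  rw [← Complex.star_def, ← trace_conjTranspose, conjTranspose_mul, hX.eq, hY.eq, trace_mul_comm]

lemma IsHermitian.re_trace_mul_self_nonneg {Y : Matrix n n ℂ} (hY : Y.IsHermitian) :
    0 ≤ (Y * Y).trace.re := by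
  have h := (posSemidef_conjTranspose_mul_self Y).trace_nonneg
  rw [hY.eq] at h
  exact (Complex.nonneg_iff.mp h).1

lemma IsHermitian.trace_mul_nonneg_of_idempotent {P Q : Matrix n n ℂ} (hP : P.IsHermitian)
    (hPP : P * P = P) (hQ : Q.PosSemidef) : 0 ≤ (P * Q).trace := by
  have h := hQ.conjTranspose_mul_mul_same P
  rw [hP.eq] at h
  calc 0 ≤ (P * Q * P).trace := h.trace_nonneg
    _ = (P * Q).trace := by rw [trace_mul_comm, ← Matrix.mul_assoc, hPP]

lemma trace_sub_mul_sub_of_mul_self_eq_one {R : Type*} [CommRing R] [DecidableEq n]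
    {M N : Matrix n n R} (hM : M * M = 1) (hN : N * N = 1) :
    ((N - M) * (N - M)).trace = 2 * Fintype.card n - 2 * (M * N).trace := by
  rw [show (N - M) * (N - M) = N * N - N * M - M * N + M * M by noncomm_ring, hM, hN,
    trace_add, trace_sub, trace_sub, trace_mul_comm N M, trace_one]
  ring

lemma re_trace_smul_sub_mul_smul_sub [DecidableEq n] (t : ℝ) (X : Matrix n n ℂ)
    {B : Matrix n n ℂ} (hB : B * B = 1) :
    ((t • X - B) * (t • X - B)).trace.re =
      (X * X).trace.re * (t * t) + -2 * (X * B).trace.re * t + Fintype.card n := by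
  rw [show (t • X - B) * (t • X - B) = (t * t) • (X * X) - t • (X * B) - t • (B * X) + B * B by
    simp only [sub_mul, mul_sub, smul_mul_assoc, mul_smul_comm, smul_sub, smul_smul]; abel, hB,
    trace_add, trace_sub, trace_sub, trace_smul, trace_smul, trace_smul, trace_mul_comm B X,
    trace_one]
  simp only [Complex.add_re, Complex.sub_re, Complex.smul_re, Complex.natCast_re, smul_eq_mul]
  ring

lemma sum_re_trace_mul_le_sqrt [DecidableEq n] {ι : Type*} [Fintype ι] {X B : ι → Matrix n n ℂ}
    (hX : ∀ i, (X i).IsHermitian) (hB : ∀ i, (B i).IsHermitian) (hB2 : ∀ i, B i * B i = 1) :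
    ∑ i, (X i * B i).trace.re ≤
      √((∑ i, (X i * X i).trace.re) * (Fintype.card ι * Fintype.card n)) := by
  have hquad : ∀ t : ℝ, 0 ≤ (∑ i, (X i * X i).trace.re) * (t * t)
      + -2 * (∑ i, (X i * B i).trace.re) * t + Fintype.card ι * Fintype.card n := by
    intro t
    have h := Finset.sum_nonneg fun i (_ : i ∈ Finset.univ) =>
      (((hX i).smul (IsSelfAdjoint.all t)).sub (hB i)).re_trace_mul_self_nonneg
    simp only [re_trace_smul_sub_mul_smul_sub t _ (hB2 _), Finset.sum_add_distrib,
      ← Finset.sum_mul, ← Finset.mul_sum, Finset.sum_const, Finset.card_univ, nsmul_eq_mul] at h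
    exact h
  have hdisc := discrim_le_zero hquad
  rw [discrim] at hdisc
  exact (le_abs_self _).trans (Real.abs_le_sqrt (by nlinarith))

end Matrix

lemma mul_self_eq_one_of_orthogonal_idempotents {R : Type*} [Ring R] {ι : Type*} [Fintype ι]
    [DecidableEq ι] {e : ι → R} (horth : ∀ i j, i ≠ j → e i * e j = 0)
    (hidem : ∀ i, e i * e i = e i) (hsum : ∑ i, e i = 1) (ε : ι → ℤˣ) :
    (∑ i, (ε i : ℤ) • e i) * (∑ i, (ε i : ℤ) • e i) = 1 := by
  calc (∑ i, (ε i : ℤ) • e i) * (∑ i, (ε i : ℤ) • e i)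
      = ∑ i, ∑ j, ((ε i : ℤ) * ε j) • (e i * e j) := by
        simp only [Finset.sum_mul_sum, smul_mul_smul_comm]
    _ = ∑ i, e i := by
        refine Finset.sum_congr rfl fun i _ => ?_
        rw [Finset.sum_eq_single i (fun j _ hji => by rw [horth i j hji.symm, smul_zero])
          (by simp), ← Units.val_mul, Int.units_mul_self, hidem, Units.val_one, one_smul]
    _ = 1 := hsum

def evenClass : Fin 4 → Fin 3 → Fin 2 := ![![0, 0, 0], ![0, 1, 1], ![1, 0, 1], ![1, 1, 0]]

def oddClass : Fin 4 → Fin 3 → Fin 2 := ![![0, 0, 1], ![0, 1, 0], ![1, 0, 0], ![1, 1, 1]]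

lemma evenClass_injective : Function.Injective evenClass := by decide

lemma oddClass_injective : Function.Injective oddClass := by decide

lemma par_evenClass (i : Fin 4) : par (evenClass i) = 0 := by revert i; decide

lemma par_oddClass (i : Fin 4) : par (oddClass i) = 1 := by revert i; decide

def Msign : Fin 3 → Fin 4 → ℤˣ := ![![-1, -1, 1, 1], ![-1, 1, -1, 1], ![-1, 1, 1, -1]]

def Nsign : Fin 3 → Fin 4 → ℤˣ := ![![1, 1, -1, -1], ![1, -1, 1, -1], ![-1, 1, 1, -1]]

section Correlation

variable {ρ : (Fin 3 → Fin 2) → Mat4}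

lemma Mop_eq_sum (y : Fin 3) :
    Mop ρ y = ∑ i, (Msign y i : ℤ) • ρ (evenClass i) := by
  fin_cases y <;> simp [Mop, Msign, evenClass, Fin.sum_univ_four] <;> abel

lemma Nop_eq_sum (y : Fin 3) :
    Nop ρ y = ∑ i, (Nsign y i : ℤ) • ρ (oddClass i) := by
  fin_cases y <;> simp [Nop, Nsign, oddClass, Fin.sum_univ_four] <;> abel

lemma isHermitian_Mop (hρ : ∀ x, (ρ x).IsHermitian) (y : Fin 3) : (Mop ρ y).IsHermitian := by
  rw [Mop_eq_sum]
  exact (isSelfAdjoint_sum _ fun i _ => (IsSelfAdjoint.all _).smul (hρ _).isSelfAdjoint).isHermitian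

lemma isHermitian_Nop (hρ : ∀ x, (ρ x).IsHermitian) (y : Fin 3) : (Nop ρ y).IsHermitian := by
  rw [Nop_eq_sum]
  exact (isSelfAdjoint_sum _ fun i _ => (IsSelfAdjoint.all _).smul (hρ _).isSelfAdjoint).isHermitian

lemma Mop_mul_self (hproj : ∀ x, ρ x * ρ x = ρ x)
    (horth : ∀ x x', x ≠ x' → par x = par x' → ρ x * ρ x' = 0)
    (hsum0 : ρ ![0, 0, 0] + ρ ![0, 1, 1] + ρ ![1, 0, 1] + ρ ![1, 1, 0] = 1) (y : Fin 3) :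
    Mop ρ y * Mop ρ y = 1 := by
  rw [Mop_eq_sum]
  exact mul_self_eq_one_of_orthogonal_idempotents
    (fun i j hij => horth _ _ (evenClass_injective.ne hij) (by rw [par_evenClass, par_evenClass]))
    (fun i => hproj _) (by simpa [Fin.sum_univ_four, evenClass] using hsum0) _

lemma Nop_mul_self (hproj : ∀ x, ρ x * ρ x = ρ x)
    (horth : ∀ x x', x ≠ x' → par x = par x' → ρ x * ρ x' = 0)
    (hsum1 : ρ ![0, 0, 1] + ρ ![0, 1, 0] + ρ ![1, 0, 0] + ρ ![1, 1, 1] = 1) (y : Fin 3) :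
    Nop ρ y * Nop ρ y = 1 := by
  rw [Nop_eq_sum]
  exact mul_self_eq_one_of_orthogonal_idempotents
    (fun i j hij => horth _ _ (oddClass_injective.ne hij) (by rw [par_oddClass, par_oddClass]))
    (fun i => hproj _) (by simpa [Fin.sum_univ_four, oddClass] using hsum1) _

lemma sum_Mop_mul_Nop :
    ∑ y, Mop ρ y * Nop ρ y =
      4 • (ρ ![0, 0, 0] * ρ ![1, 1, 1] + ρ ![0, 1, 1] * ρ ![1, 0, 0]
        + ρ ![1, 0, 1] * ρ ![0, 1, 0] + ρ ![1, 1, 0] * ρ ![0, 0, 1])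
      - (ρ ![0, 0, 0] + ρ ![0, 1, 1] + ρ ![1, 0, 1] + ρ ![1, 1, 0])
        * (ρ ![0, 0, 1] + ρ ![0, 1, 0] + ρ ![1, 0, 0] + ρ ![1, 1, 1]) := by
  simp only [Fin.sum_univ_three, Mop, Nop, cons_val_zero, cons_val_one, cons_val_two, tail_cons,
    head_cons]
  noncomm_ring

lemma neg_four_le_sum_re_trace_Mop_mul_Nop (hρ : ∀ x, (ρ x).PosSemidef)
    (hproj : ∀ x, ρ x * ρ x = ρ x)
    (hsum0 : ρ ![0, 0, 0] + ρ ![0, 1, 1] + ρ ![1, 0, 1] + ρ ![1, 1, 0] = 1)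
    (hsum1 : ρ ![0, 0, 1] + ρ ![0, 1, 0] + ρ ![1, 0, 0] + ρ ![1, 1, 1] = 1) :
    -4 ≤ ∑ y, (Mop ρ y * Nop ρ y).trace.re := by
  have hnonneg x x' : 0 ≤ (ρ x * ρ x').trace.re :=
    (Complex.nonneg_iff.mp ((hρ x).1.trace_mul_nonneg_of_idempotent (hproj x) (hρ x'))).1
  rw [← Complex.re_sum, ← trace_sum, sum_Mop_mul_Nop, hsum0, hsum1, mul_one]
  simp only [trace_sub, trace_smul, trace_add, trace_one, Fintype.card_fin, Complex.sub_re,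
    Complex.smul_re, Complex.add_re, Nat.cast_ofNat, Complex.re_ofNat]
  rw [nsmul_eq_mul, Nat.cast_ofNat]
  linarith [hnonneg ![0, 0, 0] ![1, 1, 1], hnonneg ![0, 1, 1] ![1, 0, 0],
    hnonneg ![1, 0, 1] ![0, 1, 0], hnonneg ![1, 1, 0] ![0, 0, 1]]

end Correlation

theorem correlation_bound_general
    (ρ : (Fin 3 → Fin 2) → Mat4)
    (hρ : ∀ x, (ρ x).PosSemidef)
    (hproj : ∀ x, ρ x * ρ x = ρ x)
    (horth : ∀ x x', x ≠ x' → par x = par x' → ρ x * ρ x' = 0)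
    (hsum0 : ρ ![0, 0, 0] + ρ ![0, 1, 1] + ρ ![1, 0, 1] + ρ ![1, 1, 0] = 1)
    (hsum1 : ρ ![0, 0, 1] + ρ ![0, 1, 0] + ρ ![1, 0, 0] + ρ ![1, 1, 1] = 1)
    (B : Fin 3 → Mat4)
    (hB : ∀ y, (B y).IsHermitian)
    (hB2 : ∀ y, B y * B y = 1) :
    ∑ y : Fin 3, ((Nop ρ y - Mop ρ y) * B y).trace
      ≤ ((8 * Real.sqrt 6 : ℝ) : ℂ) := by
  have hX y : (Nop ρ y - Mop ρ y).IsHermitian :=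
    (isHermitian_Nop (fun x => (hρ x).1) y).sub (isHermitian_Mop (fun x => (hρ x).1) y)
  have hsq : ∑ y, ((Nop ρ y - Mop ρ y) * (Nop ρ y - Mop ρ y)).trace.re ≤ 32 := by
    simp only [trace_sub_mul_sub_of_mul_self_eq_one (Mop_mul_self hproj horth hsum0 _)
      (Nop_mul_self hproj horth hsum1 _), Fintype.card_fin, Complex.sub_re, Complex.mul_re,
      Complex.re_ofNat, Complex.im_ofNat, zero_mul, sub_zero, Nat.cast_ofNat,
      Finset.sum_sub_distrib, ← Finset.mul_sum, Finset.sum_const, Finset.card_univ, nsmul_eq_mul]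
    linarith [neg_four_le_sum_re_trace_Mop_mul_Nop hρ hproj hsum0 hsum1]
  rw [Complex.le_def, Complex.re_sum, Complex.im_sum, Complex.ofReal_re, Complex.ofReal_im]
  refine ⟨?_, Finset.sum_eq_zero fun y _ => (hX y).im_trace_mul_eq_zero (hB y)⟩
  calc ∑ y, ((Nop ρ y - Mop ρ y) * B y).trace.re
      ≤ √((∑ y, ((Nop ρ y - Mop ρ y) * (Nop ρ y - Mop ρ y)).trace.re) * (3 * 4)) := by
        simpa using sum_re_trace_mul_le_sqrt hX hB hB2
    _ ≤ √(32 * (3 * 4)) := Real.sqrt_le_sqrt (by linarith)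
    _ = 8 * √6 := by
        rw [show (32 * (3 * 4) : ℝ) = 8 ^ 2 * 6 by norm_num, Real.sqrt_mul (by positivity),
          Real.sqrt_sq (by norm_num)]

/-- If each parity class of the eight density matrices consists of pairwise
orthogonal rank-one projections summing to I₄, then for any dichotomic
observables B₁, B₂, B₃ the correlation Δ = Σ_y Tr[(N_y − M_y)B_y] ≤ 8√6. -/
theorem correlation_bound
    (ρ : (Fin 3 → Fin 2) → Mat4)
    (hρ : ∀ x, (ρ x).PosSemidef)
    (hρtr : ∀ x, (ρ x).trace = 1)
    (hproj : ∀ x, ρ x * ρ x = ρ x)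
    (horth : ∀ x x', x ≠ x' → par x = par x' → ρ x * ρ x' = 0)
    (hsum0 : ρ ![0, 0, 0] + ρ ![0, 1, 1] + ρ ![1, 0, 1] + ρ ![1, 1, 0] = 1)
    (hsum1 : ρ ![0, 0, 1] + ρ ![0, 1, 0] + ρ ![1, 0, 0] + ρ ![1, 1, 1] = 1)
    (B : Fin 3 → Mat4)
    (hB : ∀ y, (B y).IsHermitian)
    (hB2 : ∀ y, B y * B y = 1) :
    ∑ y : Fin 3, ((Nop ρ y - Mop ρ y) * B y).trace
      ≤ ((8 * Real.sqrt 6 : ℝ) : ℂ) :=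
  correlation_bound_general ρ hρ hproj horth hsum0 hsum1 B hB hB2
end
end

section
/- (Theorem 2(i)) Let Ψ be a 2×2 complex matrix with Tr[Ψ†Ψ] = 1, representing the two-qubit unit vector |ψ⟩ = Σ_{a,b} Ψ_{ab} |a⟩|b⟩. Suppose there exist 2×2 unitary matrices U₀, U₁, U₂, U₃ such that the four vectors (U_i ⊗ I₂)|ψ⟩ are pairwise orthogonal, i.e. Tr[Ψ† U_i† U_j Ψ] = 0 for all i ≠ j. Then Ψ†Ψ = (1/2)I₂ and ΨΨ† = (1/2)I₂; that is, |ψ⟩ is maximally entangled. -/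
open Matrix

noncomputable section

abbrev Mat2 := Matrix (Fin 2) (Fin 2) ℂ

/-- Theorem 2(i): if Ψ is the coefficient matrix of a two-qubit unit vector |ψ⟩
and there exist four 2×2 unitaries U₀,…,U₃ such that the vectors (U_i ⊗ I₂)|ψ⟩
are pairwise orthogonal, then |ψ⟩ is maximally entangled:
Ψ†Ψ = (1/2)I₂ and ΨΨ† = (1/2)I₂. -/
theorem orthogonal_local_unitaries_implies_maximally_entangled
    (Ψ : Mat2) (hΨ : (Ψᴴ * Ψ).trace = 1)
    (U : Fin 4 → Mat2)
    (hU : ∀ i, U i ∈ Matrix.unitaryGroup (Fin 2) ℂ)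
    (horth : ∀ i j, i ≠ j → (Ψᴴ * (U i)ᴴ * U j * Ψ).trace = 0) :
    Ψᴴ * Ψ = (2 : ℂ)⁻¹ • 1 ∧ Ψ * Ψᴴ = (2 : ℂ)⁻¹ • 1 := by
  have hUU : ∀ i, (U i)ᴴ * U i = 1 := fun i => by
    have := (Matrix.mem_unitaryGroup_iff'.mp (hU i))
    simpa [Matrix.star_eq_conjTranspose] using this
  set B : Fin 4 → Mat2 := fun i => U i * Ψ with hB
  set T : Matrix (Fin 4) (Fin 2 × Fin 2) ℂ := Matrix.of (fun i p => B i p.1 p.2) with hT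
  have key : ∀ i j, (T * Tᴴ) i j = (Ψᴴ * (U j)ᴴ * U i * Ψ).trace := by
    intro i j
    have hassoc : Ψᴴ * (U j)ᴴ * U i * Ψ = (B j)ᴴ * B i := by
      simp [hB, Matrix.conjTranspose_mul, Matrix.mul_assoc]
    rw [hassoc]
    simp only [Matrix.trace, Matrix.diag, Matrix.mul_apply, Matrix.conjTranspose_apply,
      hT, Matrix.of_apply, Fintype.sum_prod_type]
    rw [Finset.sum_comm]
    congr 1; ext a; congr 1; ext b; ring
  have hTT : T * Tᴴ = 1 := by
    ext i j
    rw [key i j]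
    by_cases hij : i = j
    · subst hij
      have : Ψᴴ * (U i)ᴴ * U i * Ψ = Ψᴴ * Ψ := by
        rw [Matrix.mul_assoc (Ψᴴ), hUU i, Matrix.mul_one]
      rw [this, hΨ, Matrix.one_apply_eq]
    · rw [horth j i (Ne.symm hij), Matrix.one_apply_ne hij]
  have hTT' : Tᴴ * T = 1 := (Matrix.mul_eq_one_comm_of_equiv (Fintype.equivOfCardEq (by simp) : Fin 4 ≃ Fin 2 × Fin 2)).mp hTT
  -- completeness relation
  have comp : ∀ (p q : Fin 2 × Fin 2),
      ∑ i, (starRingEnd ℂ) (B i p.1 p.2) * B i q.1 q.2 = if p = q then 1 else 0 := by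
    intro p q
    have := congrFun (congrFun hTT' p) q
    simpa [Matrix.mul_apply, Matrix.conjTranspose_apply, Matrix.one_apply, hT] using this
  have h1 : Ψᴴ * Ψ = (2 : ℂ)⁻¹ • 1 := by
    have hBi : ∀ i, (B i)ᴴ * B i = Ψᴴ * Ψ := fun i => by
      simp only [hB, Matrix.conjTranspose_mul]
      rw [Matrix.mul_assoc, ← Matrix.mul_assoc (U i)ᴴ, hUU i, Matrix.one_mul]
    ext b d
    have hent : (4 : ℂ) * (Ψᴴ * Ψ) b d = 2 * (if b = d then 1 else 0) := by
      have e1 : (∑ i, ((B i)ᴴ * B i)) b d = (4 : ℂ) * (Ψᴴ * Ψ) b d := by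
        simp [hBi, Matrix.sum_apply]
      have e2 : (∑ i, ((B i)ᴴ * B i)) b d
          = ∑ a : Fin 2, ∑ i, (starRingEnd ℂ) (B i a b) * B i a d := by
        simp only [Matrix.sum_apply, Matrix.mul_apply, Matrix.conjTranspose_apply]
        rw [Finset.sum_comm]
        rfl
      have e3 : ∀ a : Fin 2, ∑ i, (starRingEnd ℂ) (B i a b) * B i a d
          = if b = d then 1 else 0 := fun a => by
        simpa [Prod.ext_iff] using comp (a, b) (a, d)
      rw [← e1, e2]
      simp only [e3]
      split <;> simp
    simp only [Matrix.smul_apply, Matrix.one_apply, smul_eq_mul]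
    by_cases hbd : b = d
    · simp only [hbd, if_pos rfl, mul_one] at hent ⊢
      linear_combination hent / 4
    · simp only [hbd, if_neg hbd, mul_zero] at hent ⊢
      linear_combination hent / 4
  refine ⟨h1, ?_⟩
  have h2 : ((2 : ℂ) • Ψᴴ) * Ψ = 1 := by
    rw [Matrix.smul_mul, h1, smul_smul]
    norm_num
  have h3 : Ψ * ((2 : ℂ) • Ψᴴ) = 1 := mul_eq_one_comm.mp h2
  rw [Matrix.mul_smul] at h3
  have := congrArg (fun M => (2 : ℂ)⁻¹ • M) h3
  simpa [smul_smul] using this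
end
end

section
/- Let Q, P, R be 2×2 Hermitian matrices with Q² = P² = R² = I₂ that pairwise anticommute, and let U be a 2×2 unitary matrix satisfying U†QU = Q, U†PU = −P and U†RU = −R. Then there exists z ∈ ℂ with |z| = 1 such that U = zQ. -/
open Matrix

noncomputable section

/-!
Both Q and U anticommute with P and with R, so W = QU commutes with P and R. For 2 × 2 matrices
and traceless Y one has XY + YX = tr X • Y + tr (XY) • 1. Take Y = P and X = W: here tr P = 0 and
tr (WP) = 0, because R anticommutes with P and with WP; hence 2WP = tr W • P and W is scalar.
So U = QW = cQ, and |c| = 1 because |det U| = 1 and (det Q)² = 1.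
-/

namespace Matrix

variable {n K : Type*} [Fintype n] [DecidableEq n]

theorem trace_eq_zero_of_anticomm [Field K] [NeZero (2 : K)] {X Y : Matrix n n K}
    (hY2 : Y * Y = 1) (h : X * Y + Y * X = 0) : X.trace = 0 := by
  have hconj : Y * X * Y = -X := by
    calc Y * X * Y = (X * Y + Y * X) * Y - X * (Y * Y) := by noncomm_ring
    _ = -X := by rw [h, hY2]; noncomm_ring
  have h2 : X.trace = -X.trace := by
    rw [← trace_neg, ← hconj, trace_mul_cycle, hY2, one_mul]
  have : (2 : K) * X.trace = 0 := by linear_combination h2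
  exact (mul_eq_zero.1 this).resolve_left two_ne_zero

theorem mul_add_mul_fin_two_of_trace_eq_zero {R : Type*} [CommRing R]
    (X Y : Matrix (Fin 2) (Fin 2) R) (hY : Y.trace = 0) :
    X * Y + Y * X = X.trace • Y + (X * Y).trace • 1 := by
  rw [trace_fin_two] at hY
  have hy : Y 1 1 = -Y 0 0 := by linear_combination hY
  ext i j
  fin_cases i <;> fin_cases j <;>
    simp [mul_apply, trace_fin_two, Fin.sum_univ_two, hy] <;> ring

theorem eq_smul_one_of_commute_of_anticomm [Field K] [NeZero (2 : K)]
    {X P R : Matrix (Fin 2) (Fin 2) K} (hP2 : P * P = 1) (hR2 : R * R = 1)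
    (hPR : P * R + R * P = 0) (hXP : Commute X P) (hXR : Commute X R) :
    X = (X.trace / 2) • 1 := by
  have htP : P.trace = 0 := trace_eq_zero_of_anticomm hR2 hPR
  have htXP : (X * P).trace = 0 := by
    refine trace_eq_zero_of_anticomm hR2 ?_
    rw [mul_assoc, ← mul_assoc R, ← hXR.eq, mul_assoc, ← mul_add, hPR, mul_zero]
  have h2XP : (2 : K) • (X * P) = X.trace • P := by
    have := mul_add_mul_fin_two_of_trace_eq_zero X P htP
    rwa [← hXP.eq, htXP, zero_smul, add_zero, ← two_smul K] at this
  calc X = (X * P) * P := by rw [mul_assoc, hP2, mul_one]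
  _ = (X.trace / 2) • 1 := by
    rw [← inv_smul_smul₀ (two_ne_zero : (2 : K) ≠ 0) (X * P), h2XP, smul_smul,
      smul_mul, hP2, inv_mul_eq_div]

theorem anticomm_of_conjTranspose_mul_mul_eq_neg {α : Type*} [CommRing α] [StarRing α]
    {U P : Matrix n n α} (hU : U ∈ unitaryGroup n α) (h : Uᴴ * P * U = -P) :
    U * P + P * U = 0 := by
  have hUU : U * Uᴴ = 1 := mem_unitaryGroup_iff.1 hU
  calc U * P + P * U = U * P + U * (Uᴴ * P * U) := by
        rw [← mul_assoc, ← mul_assoc, hUU, one_mul]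
  _ = 0 := by rw [h, mul_neg, add_neg_cancel]

theorem norm_eq_one_of_unitary_eq_smul {𝕜 : Type*} [RCLike 𝕜] [Nonempty n]
    {U Q : Matrix n n 𝕜} {c : 𝕜} (hU : U ∈ unitaryGroup n 𝕜) (hQ2 : Q * Q = 1)
    (h : U = c • Q) : ‖c‖ = 1 := by
  have hdetU : ‖U.det‖ = 1 := CStarRing.norm_of_mem_unitary (det_of_mem_unitary hU)
  have hdetQ : ‖Q.det‖ = 1 := by
    have : ‖Q.det‖ ^ 2 = 1 := by rw [← norm_pow, sq, ← det_mul, hQ2, det_one, norm_one]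
    exact (pow_eq_one_iff_of_nonneg (norm_nonneg _) two_ne_zero).1 this
  rw [h, det_smul, norm_mul, hdetQ, mul_one, norm_pow] at hdetU
  exact (pow_eq_one_iff_of_nonneg (norm_nonneg _) Fintype.card_ne_zero).1 hdetU

end Matrix

theorem commute_mul_of_anticomm {A : Type*} [Ring A] {Q U P : A}
    (hQP : Q * P + P * Q = 0) (hUP : U * P + P * U = 0) : Commute (Q * U) P := by
  calc Q * U * P = Q * (U * P + P * U) - (Q * P + P * Q) * U + P * (Q * U) := by noncomm_ring
  _ = P * (Q * U) := by rw [hUP, hQP]; noncomm_ring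

theorem unitary_fixing_one_flipping_two_general
    (Q P R : Mat2)
    (hQ2 : Q * Q = 1) (hP2 : P * P = 1) (hR2 : R * R = 1)
    (hQP : Q * P + P * Q = 0) (hQR : Q * R + R * Q = 0) (hPR : P * R + R * P = 0)
    (U : Mat2) (hU : U ∈ Matrix.unitaryGroup (Fin 2) ℂ)
    (hconjP : Uᴴ * P * U = -P)
    (hconjR : Uᴴ * R * U = -R) :
    ∃ z : ℂ, ‖z‖ = 1 ∧ U = z • Q := by
  set c := (Q * U).trace / 2
  have hQU : Q * U = c • 1 :=
    eq_smul_one_of_commute_of_anticomm hP2 hR2 hPR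
      (commute_mul_of_anticomm hQP (anticomm_of_conjTranspose_mul_mul_eq_neg hU hconjP))
      (commute_mul_of_anticomm hQR (anticomm_of_conjTranspose_mul_mul_eq_neg hU hconjR))
  have hUc : U = c • Q := by
    rw [← one_mul U, ← hQ2, mul_assoc, hQU, mul_smul_one]
  exact ⟨c, norm_eq_one_of_unitary_eq_smul hU hQ2 hUc, hUc⟩

/-- If Q, P, R are pairwise anticommuting Hermitian involutions on ℂ² and U is
a unitary with U†QU = Q, U†PU = −P, U†RU = −R, then U = zQ for some unit
complex number z. -/
theorem unitary_fixing_one_flipping_two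
    (Q P R : Mat2)
    (hQ : Q.IsHermitian) (hP : P.IsHermitian) (hR : R.IsHermitian)
    (hQ2 : Q * Q = 1) (hP2 : P * P = 1) (hR2 : R * R = 1)
    (hQP : Q * P + P * Q = 0) (hQR : Q * R + R * Q = 0) (hPR : P * R + R * P = 0)
    (U : Mat2) (hU : U ∈ Matrix.unitaryGroup (Fin 2) ℂ)
    (hconjQ : Uᴴ * Q * U = Q)
    (hconjP : Uᴴ * P * U = -P)
    (hconjR : Uᴴ * R * U = -R) :
    ∃ z : ℂ, ‖z‖ = 1 ∧ U = z • Q :=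
  unitary_fixing_one_flipping_two_general Q P R hQ2 hP2 hR2 hQP hQR hPR U hU hconjP hconjR
end
end

section
/- Let Q, P be 2×2 Hermitian matrices with Q² = P² = I₂ and QP = −PQ, and set R = −iQP. Then the grand unitary U_G = (−I₂ + iQ − iP)/√3 is unitary, and it satisfies U_G† Q U_G = (Q − 2P − 2R)/3, U_G† P U_G = (P − 2Q − 2R)/3, and U_G† R U_G = (−R + 2Q + 2P)/3. -/
open Matrix

noncomputable section

/-- For anticommuting Hermitian involutions Q, P with R = −iQP, the grand
unitary U_G = (−I₂ + iQ − iP)/√3 is unitary and satisfies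
U_G† Q U_G = (Q − 2P − 2R)/3, U_G† P U_G = (P − 2Q − 2R)/3,
U_G† R U_G = (−R + 2Q + 2P)/3. -/
theorem grand_unitary_action
    (Q P : Mat2)
    (hQ : Q.IsHermitian) (hP : P.IsHermitian)
    (hQ2 : Q * Q = 1) (hP2 : P * P = 1)
    (hQP : Q * P = -(P * Q)) :
    let R : Mat2 := -Complex.I • (Q * P)
    let UG : Mat2 := ((Real.sqrt 3 : ℝ) : ℂ)⁻¹ • (-1 + Complex.I • Q - Complex.I • P)
    UG ∈ Matrix.unitaryGroup (Fin 2) ℂ ∧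
      UGᴴ * Q * UG = (3 : ℂ)⁻¹ • (Q - (2 : ℂ) • P - (2 : ℂ) • R) ∧
      UGᴴ * P * UG = (3 : ℂ)⁻¹ • (P - (2 : ℂ) • Q - (2 : ℂ) • R) ∧
      UGᴴ * R * UG = (3 : ℂ)⁻¹ • (-R + (2 : ℂ) • Q + (2 : ℂ) • P) := by
  intro R UG
  set c : ℂ := ((Real.sqrt 3 : ℝ) : ℂ)⁻¹ with hcdef
  have h3 : ((Real.sqrt 3 : ℝ) : ℂ) * ((Real.sqrt 3 : ℝ) : ℂ) = 3 := by
    norm_cast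
    exact Real.mul_self_sqrt (by norm_num)
  have hcc : c * c = (3 : ℂ)⁻¹ := by rw [hcdef, ← mul_inv, h3]
  have hPQ : P * Q = -(Q * P) := by rw [hQP, neg_neg]
  have hQQ' : ∀ X : Mat2, Q * (Q * X) = X := by
    intro X; rw [← mul_assoc, hQ2, one_mul]
  have hPP' : ∀ X : Mat2, P * (P * X) = X := by
    intro X; rw [← mul_assoc, hP2, one_mul]
  have hPQ' : ∀ X : Mat2, P * (Q * X) = -(Q * (P * X)) := by
    intro X; rw [← mul_assoc, ← mul_assoc, hPQ, neg_mul]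
  set A : Mat2 := -1 + Complex.I • Q - Complex.I • P with hA
  set B : Mat2 := -1 - Complex.I • Q + Complex.I • P with hB
  have hAH : Aᴴ = B := by
    rw [hA, hB]
    simp [Matrix.conjTranspose_add, Matrix.conjTranspose_sub, Matrix.conjTranspose_smul,
      hQ.eq, hP.eq, Complex.conj_I, sub_eq_add_neg, neg_smul]
    try abel
  have hUGH : UGᴴ = c • B := by
    show (c • A)ᴴ = c • B
    rw [Matrix.conjTranspose_smul, hAH, hcdef]
    congr 1
    rw [Complex.star_def, map_inv₀, Complex.conj_ofReal]
  have key0 : B * A = (3 : ℂ) • 1 := by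
    rw [hA, hB]
    simp only [mul_add, add_mul, mul_sub, sub_mul, mul_neg, neg_mul, mul_one, one_mul,
      smul_mul_assoc, mul_smul_comm, smul_smul, mul_assoc, hQQ', hPP', hPQ', hPQ,
      hQ2, hP2, smul_neg, neg_neg, Complex.I_mul_I]
    match_scalars <;> simp [Complex.I_sq] <;> ring
  have key0' : A * B = (3 : ℂ) • 1 := by
    rw [hA, hB]
    simp only [mul_add, add_mul, mul_sub, sub_mul, mul_neg, neg_mul, mul_one, one_mul,
      smul_mul_assoc, mul_smul_comm, smul_smul, mul_assoc, hQQ', hPP', hPQ', hPQ,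
      hQ2, hP2, smul_neg, neg_neg, Complex.I_mul_I]
    match_scalars <;> simp [Complex.I_sq] <;> ring
  have keyQ : B * Q * A = Q - (2:ℂ) • P - (2:ℂ) • (-Complex.I • (Q * P)) := by
    rw [hA, hB]
    simp only [mul_add, add_mul, mul_sub, sub_mul, mul_neg, neg_mul, mul_one, one_mul,
      smul_mul_assoc, mul_smul_comm, smul_smul, mul_assoc, hQQ', hPP', hPQ', hPQ,
      hQ2, hP2, smul_neg, neg_neg, Complex.I_mul_I]
    match_scalars <;> simp [Complex.I_sq] <;> ring
  have keyP : B * P * A = P - (2:ℂ) • Q - (2:ℂ) • (-Complex.I • (Q * P)) := by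
    rw [hA, hB]
    simp only [mul_add, add_mul, mul_sub, sub_mul, mul_neg, neg_mul, mul_one, one_mul,
      smul_mul_assoc, mul_smul_comm, smul_smul, mul_assoc, hQQ', hPP', hPQ', hPQ,
      hQ2, hP2, smul_neg, neg_neg, Complex.I_mul_I]
    match_scalars <;> simp [Complex.I_sq] <;> ring
  have keyR : B * (-Complex.I • (Q * P)) * A =
      -(-Complex.I • (Q * P)) + (2:ℂ) • Q + (2:ℂ) • P := by
    rw [hA, hB]
    simp only [mul_add, add_mul, mul_sub, sub_mul, mul_neg, neg_mul, mul_one, one_mul,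
      smul_mul_assoc, mul_smul_comm, smul_smul, mul_assoc, hQQ', hPP', hPQ', hPQ,
      hQ2, hP2, smul_neg, neg_neg, Complex.I_mul_I]
    match_scalars <;> simp [Complex.I_sq] <;> ring
  have hconj : ∀ X Y : Mat2, B * X * A = Y → UGᴴ * X * UG = (3 : ℂ)⁻¹ • Y := by
    intro X Y h
    show UGᴴ * X * (c • A) = _
    rw [hUGH, smul_mul_assoc, smul_mul_assoc, mul_smul_comm, smul_smul, h, hcc]
  refine ⟨?_, hconj Q _ keyQ, hconj P _ keyP, hconj R _ keyR⟩
  · rw [Matrix.mem_unitaryGroup_iff]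
    have hstar : star c = c := by
      rw [hcdef, Complex.star_def, map_inv₀, Complex.conj_ofReal]
    show (c • A) * star (c • A) = 1
    rw [star_smul, Matrix.star_eq_conjTranspose, hAH, hstar, smul_mul_assoc,
      mul_smul_comm, key0', smul_smul, smul_smul, hcc]
    norm_num
end
end

section
/- Let ρ_a, ρ_b, ρ_c, ρ_d be 4×4 density matrices and let B be a dichotomic observable on ℂ⁴ such that Tr[(ρ_a + ρ_b − ρ_c − ρ_d)B] = 4. Then Bρ_a = ρ_a, Bρ_b = ρ_b, Bρ_c = −ρ_c, Bρ_d = −ρ_d, and Tr[ρ_i ρ_j] = 0 for every i ∈ {a,b} and j ∈ {c,d}. -/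
open Matrix
open scoped ComplexOrder

noncomputable section

/-!
Writing positive semidefinite matrices as `A = Xᴴ X` and `P = Yᴴ Y`, the trace `Tr (A P)` is the
squared Hilbert–Schmidt norm of `Y Xᴴ`: it is nonnegative and vanishes only when `A P = 0`. For a
dichotomic `B`, `1 - B = (1 - B)ᴴ (1 - B) / 2` is positive semidefinite, so `Tr (ρ B) ≤ Tr ρ` for
every positive semidefinite `ρ`, with equality exactly when `ρ (1 - B) = 0`, i.e. `B ρ = ρ`.
Applying this to `B` for `ρa, ρb` and to `-B` for `ρc, ρd`, the four bounds add up to the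
saturated value `4`, so each is attained. Finally `B ρ = ρ` and `B σ = -σ` give
`ρ σ = ρ B σ = -ρ σ`, hence `ρ σ = 0`.
-/

namespace Matrix

variable {n 𝕜 : Type*} [Fintype n] [RCLike 𝕜]

lemma trace_conjTranspose_mul_self_mul_conjTranspose_mul_self (X Y : Matrix n n 𝕜) :
    (Xᴴ * X * (Yᴴ * Y)).trace = ((Y * Xᴴ)ᴴ * (Y * Xᴴ)).trace := by
  rw [conjTranspose_mul, conjTranspose_conjTranspose, ← trace_mul_cycle]
  simp only [Matrix.mul_assoc]

namespace PosSemidef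

open scoped MatrixOrder

variable {A P : Matrix n n 𝕜}

lemma exists_eq_conjTranspose_mul_self (hA : A.PosSemidef) : ∃ X : Matrix n n 𝕜, A = Xᴴ * X := by
  classical
  simpa only [star_eq_conjTranspose] using CStarAlgebra.nonneg_iff_eq_star_mul_self.mp hA.nonneg

lemma trace_mul_nonneg_s12 (hA : A.PosSemidef) (hP : P.PosSemidef) : 0 ≤ (A * P).trace := by
  obtain ⟨X, rfl⟩ := hA.exists_eq_conjTranspose_mul_self
  obtain ⟨Y, rfl⟩ := hP.exists_eq_conjTranspose_mul_self
  rw [trace_conjTranspose_mul_self_mul_conjTranspose_mul_self]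
  exact (posSemidef_conjTranspose_mul_self _).trace_nonneg

lemma mul_eq_zero_of_trace_mul_eq_zero (hA : A.PosSemidef) (hP : P.PosSemidef)
    (h : (A * P).trace = 0) : A * P = 0 := by
  obtain ⟨X, rfl⟩ := hA.exists_eq_conjTranspose_mul_self
  obtain ⟨Y, rfl⟩ := hP.exists_eq_conjTranspose_mul_self
  rw [trace_conjTranspose_mul_self_mul_conjTranspose_mul_self,
    trace_conjTranspose_mul_self_eq_zero_iff] at h
  calc Xᴴ * X * (Yᴴ * Y) = Xᴴ * (Y * Xᴴ)ᴴ * Y := by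
        simp only [conjTranspose_mul, conjTranspose_conjTranspose, Matrix.mul_assoc]
    _ = 0 := by rw [h, conjTranspose_zero, Matrix.mul_zero, Matrix.zero_mul]

end PosSemidef

lemma IsHermitian.mul_eq_self_iff {B ρ : Matrix n n 𝕜} (hρ : ρ.IsHermitian) (hB : B.IsHermitian) :
    B * ρ = ρ ↔ ρ * B = ρ := by
  rw [← conjTranspose_inj, conjTranspose_mul, hρ.eq, hB.eq]

def IsDichotomic [DecidableEq n] (B : Matrix n n 𝕜) : Prop :=
  B.IsHermitian ∧ B * B = 1

namespace IsDichotomic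

variable [DecidableEq n] {B ρ : Matrix n n 𝕜}

lemma neg (hB : B.IsDichotomic) : (-B).IsDichotomic :=
  ⟨hB.1.neg, by rw [neg_mul_neg, hB.2]⟩

lemma posSemidef_one_sub (hB : B.IsDichotomic) : (1 - B).PosSemidef := by
  have hsq : (1 - B)ᴴ * (1 - B) = (2 : ℝ) • (1 - B) := by
    rw [conjTranspose_sub, conjTranspose_one, hB.1.eq, sub_mul, mul_sub, mul_sub, hB.2, two_smul]
    simp only [Matrix.one_mul, Matrix.mul_one]
    abel
  have h := (posSemidef_conjTranspose_mul_self (1 - B)).smul (a := (2⁻¹ : ℝ)) (by norm_num)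
  rwa [hsq, smul_smul, inv_mul_cancel₀ two_ne_zero, one_smul] at h

lemma trace_mul_le_trace (hB : B.IsDichotomic) (hρ : ρ.PosSemidef) : (ρ * B).trace ≤ ρ.trace := by
  have h := hρ.trace_mul_nonneg_s12 hB.posSemidef_one_sub
  rwa [mul_sub, Matrix.mul_one, trace_sub, sub_nonneg] at h

lemma mul_eq_self_of_trace_mul_eq_trace (hB : B.IsDichotomic) (hρ : ρ.PosSemidef)
    (h : (ρ * B).trace = ρ.trace) : B * ρ = ρ := by
  have hρB : ρ * (1 - B) = 0 := hρ.mul_eq_zero_of_trace_mul_eq_zero hB.posSemidef_one_sub <| by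
    rw [mul_sub, Matrix.mul_one, trace_sub, h, sub_self]
  rw [mul_sub, Matrix.mul_one, sub_eq_zero] at hρB
  exact (hρ.isHermitian.mul_eq_self_iff hB.1).mpr hρB.symm

end IsDichotomic

lemma IsHermitian.mul_eq_zero_of_mul_eq_self_of_mul_eq_neg {B ρ σ : Matrix n n 𝕜}
    (hρ : ρ.IsHermitian) (hB : B.IsHermitian) (h₁ : B * ρ = ρ) (h₂ : B * σ = -σ) : ρ * σ = 0 := by
  have hρB : ρ * B = ρ := (hρ.mul_eq_self_iff hB).mp h₁
  have h : ρ * σ = -(ρ * σ) := by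
    calc ρ * σ = ρ * (B * σ) := by rw [← Matrix.mul_assoc, hρB]
      _ = -(ρ * σ) := by rw [h₂, Matrix.mul_neg]
  have h2 : (2 : 𝕜) • (ρ * σ) = 0 := by
    rw [two_smul]
    exact eq_neg_iff_add_eq_zero.mp h
  exact (smul_eq_zero.mp h2).resolve_left two_ne_zero

end Matrix

/-- If four density matrices and a dichotomic observable B satisfy
Tr[(ρ_a + ρ_b − ρ_c − ρ_d)B] = 4, then B fixes ρ_a, ρ_b, negates ρ_c, ρ_d,
and the overlaps Tr[ρ_i ρ_j] vanish for i ∈ {a,b}, j ∈ {c,d}. -/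
theorem saturated_correlation_eigenstates
    (ρa ρb ρc ρd : Mat4)
    (ha : ρa.PosSemidef) (hatr : ρa.trace = 1)
    (hb : ρb.PosSemidef) (hbtr : ρb.trace = 1)
    (hc : ρc.PosSemidef) (hctr : ρc.trace = 1)
    (hd : ρd.PosSemidef) (hdtr : ρd.trace = 1)
    (B : Mat4) (hB : B.IsHermitian) (hB2 : B * B = 1)
    (hsat : ((ρa + ρb - ρc - ρd) * B).trace = 4) :
    B * ρa = ρa ∧ B * ρb = ρb ∧ B * ρc = -ρc ∧ B * ρd = -ρd ∧
      (ρa * ρc).trace = 0 ∧ (ρa * ρd).trace = 0 ∧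
      (ρb * ρc).trace = 0 ∧ (ρb * ρd).trace = 0 := by
  have hB' : B.IsDichotomic := ⟨hB, hB2⟩
  have hsum : ((ρa * B).trace + (ρb * B).trace) + ((ρc * -B).trace + (ρd * -B).trace) =
      (ρa.trace + ρb.trace) + (ρc.trace + ρd.trace) := by
    simp only [add_mul, sub_mul, trace_add, trace_sub] at hsat
    rw [hatr, hbtr, hctr, hdtr, mul_neg, mul_neg, trace_neg, trace_neg]
    linear_combination hsat
  have hle_a := hB'.trace_mul_le_trace ha
  have hle_b := hB'.trace_mul_le_trace hb
  have hle_c := hB'.neg.trace_mul_le_trace hc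
  have hle_d := hB'.neg.trace_mul_le_trace hd
  obtain ⟨hab, hcd⟩ :=
    (add_eq_add_iff_eq_and_eq (add_le_add hle_a hle_b) (add_le_add hle_c hle_d)).mp hsum
  obtain ⟨hta, htb⟩ := (add_eq_add_iff_eq_and_eq hle_a hle_b).mp hab
  obtain ⟨htc, htd⟩ := (add_eq_add_iff_eq_and_eq hle_c hle_d).mp hcd
  have hBa := hB'.mul_eq_self_of_trace_mul_eq_trace ha hta
  have hBb := hB'.mul_eq_self_of_trace_mul_eq_trace hb htb
  have hBc : B * ρc = -ρc := by
    simpa only [neg_mul, neg_eq_iff_eq_neg] using hB'.neg.mul_eq_self_of_trace_mul_eq_trace hc htc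
  have hBd : B * ρd = -ρd := by
    simpa only [neg_mul, neg_eq_iff_eq_neg] using hB'.neg.mul_eq_self_of_trace_mul_eq_trace hd htd
  have orth : ∀ {ρ σ : Mat4}, ρ.PosSemidef → B * ρ = ρ → B * σ = -σ → (ρ * σ).trace = 0 :=
    fun hρ h₁ h₂ ↦ by rw [hρ.isHermitian.mul_eq_zero_of_mul_eq_self_of_mul_eq_neg hB h₁ h₂, trace_zero]
  exact ⟨hBa, hBb, hBc, hBd, orth ha hBa hBc, orth ha hBa hBd, orth hb hBb hBc, orth hb hBb hBd⟩
end
end
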